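/- arXiv:2604.19220 — 2 statements merged into one kernel-verified Lean document; each statement's English description precedes it below -/
import Mathlib

section
/- Assume q_n → q ∈ [0,1] as n → ∞, and write p(x) = q^x (1−q)^{1−x} for x ∈ {0,1}. Then τ_n/n and ν_{τ_n} are asymptotically independent, in the following sense, for every x ∈ {0,1}: (i) if 0 < c < ∞ and there exists an increasing function L : [0,∞) → [0,∞) with L(n) = l_n for all n ∈ ℕ and L(tx)/L(t) → x^c as t → ∞ for every x > 0, then for every t ∈ [0,1], P(τ_n/n ≤ t, ν_{τ_n} = x) → t^c p(x); (ii) if there exists a nondecreasing L with L(n) = l_n and L(tx)/L(t) → 1 for every x > 0 (c = 0) and moreover l_n → ∞, then for every t ∈ (0,1], P(τ_n/n ≤ t, ν_{τ_n} = x) → p(x); (iii) if there exists a nondecreasing L with L(n) = l_n, L(tx)/L(t) → 0 for 0 < x < 1 and L(tx)/L(t) → ∞ for x > 1 (c = ∞), then for every t ∈ [0,1), P(τ_n/n ≤ t, ν_{τ_n} = x) → 0, while P(τ_n/n ≤ 1, ν_{τ_n} = x) → p(x). -/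
/-!
`τ_n ≤ m` means `ε_k = 0` for `m < k ≤ n`, so by independence the product telescopes:
`P(τ_n ≤ m) = ∏ l_{k-1}/l_k = l_m/l_n`. Since `τ_n` depends only on the `ε`'s,
`P(τ_n ≤ m, ν_{τ_n} = x) = ∑_{j ≤ m} P(τ_n = j) P(ν_j = x)`. The weights `P(τ_n = j)` have
partial sums `l_k/l_n`, which vanish for fixed `k` once `l_n → ∞` (in cases (i) and (iii) because
`L(2r)/L(r)` eventually exceeds some `s > 1`), so these Toeplitz-type averages converge to
`lim (l_{m_n}/l_n) · p(x)`. With `m_n = ⌊nt⌋`, regular variation of `L` identifies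
`lim l_{⌊nt⌋}/l_n` as `t^c`, `1` or `0`.
-/

open MeasureTheory Filter Set
open scoped ENNReal

/-- `τ_n = max {k ≤ n : ε_k = 1}`, with `τ_n = 0` if no such `k` exists. -/
def tauProc {Ω : Type*} (ε : ℕ → Ω → ℕ) (n : ℕ) (ω : Ω) : ℕ :=
  ((Finset.Icc 1 n).filter fun k => ε k ω = 1).sup id

open Topology

section TauProc

variable {Ω : Type*} {ε : ℕ → Ω → ℕ}

theorem tauProc_le_iff {n m : ℕ} {ω : Ω} :
    tauProc ε n ω ≤ m ↔ ∀ k ∈ Finset.Ioc m n, ε k ω ≠ 1 := by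
  simp only [tauProc, Finset.sup_le_iff, Finset.mem_filter, Finset.mem_Icc, Finset.mem_Ioc,
    id_eq]
  refine ⟨fun h k hk hε => ?_, fun h k hk => ?_⟩
  · have := h k ⟨⟨by omega, hk.2⟩, hε⟩
    omega
  · by_contra! hmk
    exact h k ⟨hmk, hk.1.2⟩ hk.2

theorem tauProc_le_self (n : ℕ) (ω : Ω) : tauProc ε n ω ≤ n :=
  tauProc_le_iff.2 fun k hk => absurd (Finset.mem_Ioc.1 hk) (by omega)

theorem setOf_tauProc_le (n m : ℕ) :
    {ω | tauProc ε n ω ≤ m} = ⋂ k ∈ Finset.Ioc m n, ε k ⁻¹' {1}ᶜ := by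
  ext ω
  simp [tauProc_le_iff]

theorem measurable_tauProc {mΩ : MeasurableSpace Ω} (hε : ∀ k, Measurable[mΩ] (ε k)) (n : ℕ) :
    Measurable[mΩ] (tauProc ε n) :=
  measurable_of_Iic fun m => by
    change MeasurableSet {ω | tauProc ε n ω ≤ m}
    rw [setOf_tauProc_le]
    exact Finset.measurableSet_biInter _ fun k _ => (hε k (measurableSet_singleton 1)).compl

theorem cast_tauProc_div_le_iff {n : ℕ} {t : ℝ} (ht : 0 ≤ t) (ω : Ω) :
    (tauProc ε n ω : ℝ) / n ≤ t ↔ tauProc ε n ω ≤ ⌊n * t⌋₊ := by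
  rcases n.eq_zero_or_pos with rfl | hn
  -- `τ_0 = 0` and `x / 0 = 0`, so both sides hold
  · simp [ht, Nat.le_zero.1 (tauProc_le_self 0 ω)]
  · rw [div_le_iff₀ (by exact_mod_cast hn), Nat.le_floor_iff (by positivity), mul_comm]

end TauProc

theorem prod_Ioc_sub_one_div {f : ℕ → ℝ} (hf : ∀ k, f k ≠ 0) {m n : ℕ} (hmn : m ≤ n) :
    ∏ k ∈ Finset.Ioc m n, f (k - 1) / f k = f m / f n := by
  induction n, hmn using Nat.le_induction with
  | base => simp [div_self (hf m)]
  | succ n hmn ih =>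
    rw [Finset.prod_Ioc_succ_top hmn, ih, Nat.add_sub_cancel, div_mul_div_cancel₀ (hf n)]

theorem abs_sum_mul_le {w p : ℕ → ℝ} (hw : ∀ j, 0 ≤ w j) {C δ : ℝ} {J : ℕ}
    (hC : ∀ j, |p j| ≤ C) (hδ : ∀ j ≥ J, |p j| ≤ δ) (M : ℕ) :
    |∑ j ∈ Finset.Iic M, w j * p j|
      ≤ C * ∑ j ∈ Finset.Iic J, w j + δ * ∑ j ∈ Finset.Iic M, w j := by
  have hC0 : 0 ≤ C := (abs_nonneg _).trans (hC 0)
  have hδ0 : 0 ≤ δ := (abs_nonneg _).trans (hδ J le_rfl)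
  have hhead : ∑ j ∈ Finset.Iic M, (if j ≤ J then w j else 0) ≤ ∑ j ∈ Finset.Iic J, w j := by
    rw [← Finset.sum_filter]
    exact Finset.sum_le_sum_of_subset_of_nonneg (fun j hj => by simp_all)
      fun j _ _ => hw j
  calc |∑ j ∈ Finset.Iic M, w j * p j|
      ≤ ∑ j ∈ Finset.Iic M, w j * |p j| := by
        simpa only [abs_mul, abs_of_nonneg (hw _)] using
          Finset.abs_sum_le_sum_abs (fun j => w j * p j) _
    _ ≤ ∑ j ∈ Finset.Iic M, (C * (if j ≤ J then w j else 0) + δ * w j) := by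
        refine Finset.sum_le_sum fun j _ => ?_
        split_ifs with hj
        · nlinarith [hw j, hC j]
        · nlinarith [hw j, hδ j (by omega)]
    _ ≤ C * ∑ j ∈ Finset.Iic J, w j + δ * ∑ j ∈ Finset.Iic M, w j := by
        rw [Finset.sum_add_distrib, ← Finset.mul_sum, ← Finset.mul_sum]
        gcongr

theorem tendsto_sum_mul_of_tendsto_zero {w : ℕ → ℕ → ℝ} (hw : ∀ n j, 0 ≤ w n j)
    (hsmall : ∀ J, Tendsto (fun n => ∑ j ∈ Finset.Iic J, w n j) atTop (𝓝 0))
    {M : ℕ → ℕ} {B : ℝ} (hB : ∀ᶠ n in atTop, ∑ j ∈ Finset.Iic (M n), w n j ≤ B)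
    {p : ℕ → ℝ} (hp : Tendsto p atTop (𝓝 0)) :
    Tendsto (fun n => ∑ j ∈ Finset.Iic (M n), w n j * p j) atTop (𝓝 0) := by
  obtain ⟨C, hC⟩ := (Metric.isBounded_range_of_tendsto p hp).exists_norm_le
  rw [Metric.tendsto_nhds]
  intro e he
  set δ := e / 2 / (|B| + 1)
  have hδ : 0 < δ := by positivity
  have hδB : δ * B ≤ e / 2 := calc
    δ * B ≤ δ * (|B| + 1) := by gcongr; linarith [le_abs_self B]
    _ = e / 2 := div_mul_cancel₀ _ (by positivity)
  obtain ⟨J, hJ⟩ := eventually_atTop.1 (hp.eventually (Metric.closedBall_mem_nhds 0 hδ))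
  have hhead := (hsmall J).const_mul C
  rw [mul_zero] at hhead
  filter_upwards [hB, hhead.eventually (gt_mem_nhds (half_pos he))] with n hBn hn
  rw [Real.dist_eq, sub_zero]
  calc |∑ j ∈ Finset.Iic (M n), w n j * p j|
      ≤ C * ∑ j ∈ Finset.Iic J, w n j + δ * ∑ j ∈ Finset.Iic (M n), w n j :=
        abs_sum_mul_le (hw n) (fun j => hC _ (mem_range_self j))
          (fun j hj => by simpa using hJ j hj) (M n)
    _ < e / 2 + e / 2 := by
        exact add_lt_add_of_lt_of_le hn ((mul_le_mul_of_nonneg_left hBn hδ.le).trans hδB)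
    _ = e := add_halves e

theorem tendsto_sum_mul {w : ℕ → ℕ → ℝ} (hw : ∀ n j, 0 ≤ w n j)
    (hsmall : ∀ J, Tendsto (fun n => ∑ j ∈ Finset.Iic J, w n j) atTop (𝓝 0))
    {M : ℕ → ℕ} {a : ℝ} (ha : Tendsto (fun n => ∑ j ∈ Finset.Iic (M n), w n j) atTop (𝓝 a))
    {p : ℕ → ℝ} {π : ℝ} (hp : Tendsto p atTop (𝓝 π)) :
    Tendsto (fun n => ∑ j ∈ Finset.Iic (M n), w n j * p j) atTop (𝓝 (a * π)) := by
  have hcentered := tendsto_sum_mul_of_tendsto_zero hw hsmall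
    (ha.eventually (ge_mem_nhds (lt_add_one a))) (tendsto_sub_nhds_zero_iff.2 hp)
  simpa [mul_sub, Finset.sum_sub_distrib, ← Finset.sum_mul] using
    hcentered.add (ha.mul_const π)

theorem Monotone.tendsto_atTop_of_eventually_mul_le {l : ℕ → ℝ} (hl_mono : Monotone l)
    (hl_pos : ∀ n, 0 < l n) {s : ℝ} (hs : 1 < s) (h : ∀ᶠ n in atTop, s * l n ≤ l (2 * n)) :
    Tendsto l atTop atTop := by
  refine (tendsto_atTop_of_monotone hl_mono).resolve_right fun ⟨M, hM⟩ => ?_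
  have hM2 : Tendsto (fun n => l (2 * n)) atTop (𝓝 M) :=
    hM.comp (tendsto_atTop_mono (fun n => Nat.le_mul_of_pos_left n two_pos) tendsto_id)
  have hsM : s * M ≤ M := le_of_tendsto_of_tendsto (hM.const_mul s) hM2 h
  have hM0 : 0 < M := (hl_pos 0).trans_le (hl_mono.ge_of_tendsto hM 0)
  nlinarith

theorem tendsto_atTop_of_eventually_le_div_mul_two {L : ℝ → ℝ} {l : ℕ → ℝ}
    (hLl : ∀ n : ℕ, L n = l n) (hl_mono : Monotone l) (hl_pos : ∀ n, 0 < l n) {s : ℝ} (hs : 1 < s)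
    (h : ∀ᶠ r in atTop, s ≤ L (r * 2) / L r) : Tendsto l atTop atTop := by
  refine hl_mono.tendsto_atTop_of_eventually_mul_le hl_pos hs ?_
  filter_upwards [tendsto_natCast_atTop_atTop.eventually h] with n hn
  rwa [show (n : ℝ) * 2 = ((2 * n : ℕ) : ℝ) by push_cast; ring, hLl, hLl,
    le_div_iff₀ (hl_pos n)] at hn

theorem tendsto_div_floor_mul {L : ℝ → ℝ} (hL : MonotoneOn L (Ici 0)) {l : ℕ → ℝ}
    (hLl : ∀ n : ℕ, L n = l n) (hl_pos : ∀ n, 0 < l n) {φ : ℝ → ℝ} {t : ℝ} (ht : 0 < t)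
    (hφ : ∀ u ∈ Ioc 0 t, Tendsto (fun n : ℕ => L (n * u) / L n) atTop (𝓝 (φ u)))
    (hφt : ContinuousWithinAt φ (Ioo 0 t) t) :
    Tendsto (fun n : ℕ => l ⌊n * t⌋₊ / l n) atTop (𝓝 (φ t)) := by
  have hmono : ∀ n : ℕ, ∀ {a b : ℝ}, 0 ≤ a → a ≤ b → L a / L n ≤ L b / L n := fun n a b ha hab =>
    div_le_div_of_nonneg_right (hL ha (ha.trans hab) hab) (hLl n ▸ hl_pos n).le
  simp_rw [← hLl]
  refine tendsto_order.2 ⟨fun b hb => ?_, fun b hb => ?_⟩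
  · have := right_nhdsWithin_Ioo_neBot ht
    obtain ⟨u, hbu, hu⟩ := ((hφt.eventually (lt_mem_nhds hb)).and self_mem_nhdsWithin).exists
    have hfloor : ∀ᶠ n : ℕ in atTop, (n : ℝ) * u ≤ ⌊n * t⌋₊ := by
      have hgap := tendsto_natCast_atTop_atTop.atTop_mul_const (sub_pos.2 hu.2)
      filter_upwards [hgap.eventually_ge_atTop 1] with n hn
      nlinarith [Nat.sub_one_lt_floor ((n : ℝ) * t)]
    filter_upwards [(hφ u ⟨hu.1, hu.2.le⟩).eventually (lt_mem_nhds hbu), hfloor] with n hn hfl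
    exact hn.trans_le (hmono n (mul_nonneg n.cast_nonneg hu.1.le) hfl)
  · filter_upwards [(hφ t ⟨ht, le_rfl⟩).eventually (gt_mem_nhds hb)] with n hn
    exact (hmono n (Nat.cast_nonneg _) (Nat.floor_le (by positivity))).trans_lt hn

section Probability

open ProbabilityTheory

variable {Ω : Type*} [MeasurableSpace Ω] {μ : Measure Ω} {ε ν : ℕ → Ω → ℕ}

theorem measureReal_preimage_compl_singleton [IsProbabilityMeasure μ] {f : Ω → ℕ}
    (hf : Measurable f) {a : ℕ} {r : ℝ} (hr : 0 ≤ r)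
    (h : μ {ω | f ω = a} = ENNReal.ofReal r) : μ.real (f ⁻¹' {a}ᶜ) = 1 - r := by
  rw [preimage_compl, probReal_compl_eq_one_sub (hf (measurableSet_singleton a)),
    measureReal_def]
  change 1 - (μ {ω | f ω = a}).toReal = 1 - r
  rw [h, ENNReal.toReal_ofReal hr]

theorem indepFun_tauProc (hε : ∀ k, Measurable (ε k)) (hν : ∀ j, Measurable (ν j))
    (hindep : iIndepFun (Sum.elim ε ν) μ) (n j : ℕ) : IndepFun (tauProc ε n) (ν j) μ := by
  have h_le : ∀ i, MeasurableSpace.comap (Sum.elim ε ν i) inferInstance ≤ ‹MeasurableSpace Ω› :=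
    Sum.rec (fun k => (hε k).comap_le) (fun k => (hν k).comap_le)
  have hST : Disjoint (range Sum.inl) {(Sum.inr j : ℕ ⊕ ℕ)} := by simp
  have key := indep_iSup_of_disjoint h_le hindep.iIndep hST
  rw [IndepFun_iff_Indep]
  refine indep_of_indep_of_le_right (indep_of_indep_of_le_left key ?_) ?_
  · refine (measurable_tauProc (fun k => ?_) n).comap_le
    exact (comap_measurable (ε k)).mono (le_iSup₂_of_le (Sum.inl k) (mem_range_self k) le_rfl)
      le_rfl
  · exact le_iSup₂_of_le (Sum.inr j) rfl le_rfl

theorem measureReal_tauProc_le_eq_prod (hindep : iIndepFun ε μ) (n m : ℕ) :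
    μ.real {ω | tauProc ε n ω ≤ m} = ∏ k ∈ Finset.Ioc m n, μ.real (ε k ⁻¹' {1}ᶜ) := by
  rw [setOf_tauProc_le, measureReal_def,
    hindep.measure_inter_preimage_eq_mul _ fun k _ => (measurableSet_singleton 1).compl,
    ENNReal.toReal_prod]
  rfl

theorem measureReal_tauProc_le_nu_eq [IsFiniteMeasure μ] (hε : ∀ k, Measurable (ε k))
    (hν : ∀ j, Measurable (ν j)) (hindep : iIndepFun (Sum.elim ε ν) μ) (n m x : ℕ) :
    μ.real {ω | tauProc ε n ω ≤ m ∧ ν (tauProc ε n ω) ω = x}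
      = ∑ j ∈ Finset.Iic m, μ.real {ω | tauProc ε n ω = j} * μ.real {ω | ν j ω = x} := by
  have hunion : {ω | tauProc ε n ω ≤ m ∧ ν (tauProc ε n ω) ω = x}
      = ⋃ j ∈ Finset.Iic m, {ω | tauProc ε n ω = j} ∩ {ω | ν j ω = x} := by
    ext ω
    simp
  have hdisj : PairwiseDisjoint (Finset.Iic m : Set ℕ)
      fun j => {ω | tauProc ε n ω = j} ∩ {ω | ν j ω = x} :=
    fun i _ j _ hij => disjoint_left.2 fun ω hi hj => hij (hi.1.symm.trans hj.1)
  rw [hunion, measureReal_biUnion_finset hdisj fun j _ =>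
    (measurable_tauProc hε n (measurableSet_singleton j)).inter (hν j (measurableSet_singleton x))]
  refine Finset.sum_congr rfl fun j _ => ?_
  simp only [measureReal_def, ← ENNReal.toReal_mul]
  exact congrArg ENNReal.toReal <| (indepFun_tauProc hε hν hindep n j).measure_inter_preimage_eq_mul
    _ _ (measurableSet_singleton j) (measurableSet_singleton x)

theorem measureReal_tauProc_le [IsProbabilityMeasure μ] {l : ℕ → ℝ} (hl_pos : ∀ n, 0 < l n)
    (hl_mono : Monotone l) (hε : ∀ k, Measurable (ε k)) (hindep : iIndepFun ε μ)
    (hε_dist : ∀ n : ℕ, 1 ≤ n → μ {ω | ε n ω = 1} = ENNReal.ofReal (1 - l (n - 1) / l n))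
    {n m : ℕ} (hmn : m ≤ n) :
    μ.real {ω | tauProc ε n ω ≤ m} = l m / l n := by
  rw [measureReal_tauProc_le_eq_prod hindep, ← prod_Ioc_sub_one_div (fun k => (hl_pos k).ne') hmn]
  refine Finset.prod_congr rfl fun k hk => ?_
  have hk1 : 1 ≤ k := by have := (Finset.mem_Ioc.1 hk).1; omega
  have hratio : l (k - 1) / l k ≤ 1 := (div_le_one (hl_pos k)).2 (hl_mono (Nat.sub_le k 1))
  rw [measureReal_preimage_compl_singleton (hε k) (sub_nonneg.2 hratio) (hε_dist k hk1),
    sub_sub_cancel]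

theorem tendsto_measureReal_eq_of_bernoulli [IsProbabilityMeasure μ] {f : ℕ → Ω → ℕ}
    (hf : ∀ j, Measurable (f j)) (hf_le : ∀ j ω, f j ω ≤ 1) {r : ℕ → ℝ} (hr : ∀ j, 0 ≤ r j)
    (hdist : ∀ j, μ {ω | f j ω = 1} = ENNReal.ofReal (r j)) {ρ : ℝ}
    (hρ : Tendsto r atTop (𝓝 ρ)) {x : ℕ} (hx : x ≤ 1) :
    Tendsto (fun j => μ.real {ω | f j ω = x}) atTop (𝓝 (if x = 1 then ρ else 1 - ρ)) := by
  interval_cases x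
  · have hzero : ∀ j, {ω | f j ω = 0} = f j ⁻¹' {1}ᶜ := fun j => by
      ext ω
      have := hf_le j ω
      simp
      omega
    simp only [hzero, measureReal_preimage_compl_singleton (hf _) (hr _) (hdist _)]
    simpa using tendsto_const_nhds.sub hρ
  · simpa [measureReal_def, hdist, ENNReal.toReal_ofReal (hr _)] using hρ

theorem tendsto_measureReal_tauProc_div_le_nu_eq [IsProbabilityMeasure μ] {l : ℕ → ℝ}
    (hl_pos : ∀ n, 0 < l n) (hl_mono : Monotone l) (hl_top : Tendsto l atTop atTop)
    (hε : ∀ k, Measurable (ε k)) (hν : ∀ j, Measurable (ν j))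
    (hε_dist : ∀ n : ℕ, 1 ≤ n → μ {ω | ε n ω = 1} = ENNReal.ofReal (1 - l (n - 1) / l n))
    (hindep : iIndepFun (Sum.elim ε ν) μ) {x : ℕ} {π : ℝ}
    (hν_lim : Tendsto (fun j => μ.real {ω | ν j ω = x}) atTop (𝓝 π))
    {t : ℝ} (ht0 : 0 ≤ t) (ht1 : t ≤ 1) {a : ℝ}
    (ha : Tendsto (fun n : ℕ => l ⌊n * t⌋₊ / l n) atTop (𝓝 a)) :
    Tendsto (fun n : ℕ => μ.real {ω | (tauProc ε n ω : ℝ) / n ≤ t ∧ ν (tauProc ε n ω) ω = x})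
      atTop (𝓝 (a * π)) := by
  have hsum : ∀ {n k : ℕ}, k ≤ n →
      ∑ j ∈ Finset.Iic k, μ.real {ω | tauProc ε n ω = j} = l k / l n := fun {n k} hkn => by
      refine (sum_measureReal_preimage_singleton _ fun j _ =>
        measurable_tauProc hε n (measurableSet_singleton j)).trans ?_
      rw [Finset.coe_Iic]
      exact measureReal_tauProc_le hl_pos hl_mono hε
        (hindep.precomp (g := Sum.inl) Sum.inl_injective) hε_dist hkn
  have hfloor : ∀ n : ℕ, ⌊n * t⌋₊ ≤ n := fun n =>
    Nat.floor_le_of_le (mul_le_of_le_one_right n.cast_nonneg ht1)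
  simp_rw [cast_tauProc_div_le_iff ht0, measureReal_tauProc_le_nu_eq hε hν hindep]
  refine tendsto_sum_mul (fun n j => measureReal_nonneg) (fun J => ?_) ?_ hν_lim
  · refine ((tendsto_const_nhds (x := l J)).div_atTop hl_top).congr' ?_
    filter_upwards [eventually_ge_atTop J] with n hn using (hsum hn).symm
  · simpa only [hsum (hfloor _)] using ha

end Probability

theorem tau_nu_asymptotically_independent_general
    {Ω : Type*} [MeasurableSpace Ω] (ℙ : Measure Ω) [IsProbabilityMeasure ℙ]
    (l : ℕ → ℝ) (hl_pos : ∀ n, 0 < l n) (hl_mono : Monotone l)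
    (qseq : ℕ → ℝ) (hq_mem : ∀ n, qseq n ∈ Icc (0:ℝ) 1)
    (ε ν : ℕ → Ω → ℕ)
    (hν_le : ∀ n ω, ν n ω ≤ 1)
    (hε_meas : ∀ n, Measurable (ε n)) (hν_meas : ∀ n, Measurable (ν n))
    (hε_dist : ∀ n : ℕ, 1 ≤ n →
      ℙ {ω | ε n ω = 1} = ENNReal.ofReal (1 - l (n - 1) / l n))
    (hν_dist : ∀ n : ℕ, ℙ {ω | ν n ω = 1} = ENNReal.ofReal (qseq n))
    (hindep : ProbabilityTheory.iIndepFun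
      (Sum.elim ε ν) ℙ)
    (q : ℝ) (hq_lim : Tendsto qseq atTop (nhds q))
    (px : ℕ → ℝ) (hpx : ∀ x : ℕ, x ≤ 1 → px x = if x = 1 then q else 1 - q) :
    ∀ x : ℕ, x ≤ 1 →
      -- (i) regularly varying case, `0 < c < ∞`
      ((∀ c : ℝ, 0 < c →
        ∀ L : ℝ → ℝ, (∀ y : ℝ, 0 ≤ y → 0 ≤ L y) → StrictMonoOn L (Ici (0:ℝ)) →
          (∀ n : ℕ, L n = l n) →
          (∀ y : ℝ, 0 < y →
            Tendsto (fun t : ℝ => L (t * y) / L t) atTop (nhds (y ^ c))) →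
          ∀ t : ℝ, t ∈ Icc (0:ℝ) 1 →
            Tendsto (fun n : ℕ =>
                (ℙ {ω | (tauProc ε n ω : ℝ) / n ≤ t ∧ ν (tauProc ε n ω) ω = x}).toReal)
              atTop (nhds (t ^ c * px x))) ∧
      -- (ii) slowly varying case, `c = 0`, with `l_n → ∞`
      ((Tendsto l atTop atTop →
        (∃ L : ℝ → ℝ, (∀ y : ℝ, 0 ≤ y → 0 ≤ L y) ∧ MonotoneOn L (Ici (0:ℝ)) ∧
          (∀ n : ℕ, L n = l n) ∧
          (∀ y : ℝ, 0 < y → Tendsto (fun t : ℝ => L (t * y) / L t) atTop (nhds 1))) →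
        ∀ t : ℝ, 0 < t → t ≤ 1 →
          Tendsto (fun n : ℕ =>
              (ℙ {ω | (tauProc ε n ω : ℝ) / n ≤ t ∧ ν (tauProc ε n ω) ω = x}).toReal)
            atTop (nhds (px x)))) ∧
      -- (iii) fast increments case, `c = ∞`
      ((∃ L : ℝ → ℝ, (∀ y : ℝ, 0 ≤ y → 0 ≤ L y) ∧ MonotoneOn L (Ici (0:ℝ)) ∧
          (∀ n : ℕ, L n = l n) ∧
          (∀ y : ℝ, 0 < y → y < 1 →
            Tendsto (fun t : ℝ => L (t * y) / L t) atTop (nhds 0)) ∧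
          (∀ y : ℝ, 1 < y →
            Tendsto (fun t : ℝ => L (t * y) / L t) atTop atTop)) →
        (∀ t : ℝ, 0 ≤ t → t < 1 →
          Tendsto (fun n : ℕ =>
              (ℙ {ω | (tauProc ε n ω : ℝ) / n ≤ t ∧ ν (tauProc ε n ω) ω = x}).toReal)
            atTop (nhds 0)) ∧
        Tendsto (fun n : ℕ =>
            (ℙ {ω | (tauProc ε n ω : ℝ) / n ≤ 1 ∧ ν (tauProc ε n ω) ω = x}).toReal)
          atTop (nhds (px x)))) := by
  intro x hx
  have hν_lim := tendsto_measureReal_eq_of_bernoulli hν_meas hν_le (fun n => (hq_mem n).1)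
    hν_dist hq_lim hx
  rw [← hpx x hx] at hν_lim
  have hlim := fun {a : ℝ} hl_top {t : ℝ} (ht0 : 0 ≤ t) (ht1 : t ≤ 1) =>
    tendsto_measureReal_tauProc_div_le_nu_eq (a := a) hl_pos hl_mono hl_top hε_meas hν_meas
      hε_dist hindep hν_lim ht0 ht1
  refine ⟨?_, ?_, ?_⟩
  · intro c hc L _ hL hLl hvar t ⟨ht0, ht1⟩
    obtain ⟨s, hs1, hs⟩ := exists_between (Real.one_lt_rpow one_lt_two hc)
    have hl_top := tendsto_atTop_of_eventually_le_div_mul_two hLl hl_mono hl_pos hs1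
      ((hvar 2 two_pos).eventually (le_mem_nhds hs))
    refine hlim hl_top ht0 ht1 ?_
    rcases ht0.eq_or_lt with rfl | ht
    · simpa [Real.zero_rpow hc.ne'] using (tendsto_const_nhds (x := l 0)).div_atTop hl_top
    · exact tendsto_div_floor_mul hL.monotoneOn hLl hl_pos ht
        (fun u hu => (hvar u hu.1).comp tendsto_natCast_atTop_atTop)
        (Real.continuous_rpow_const hc.le).continuousWithinAt
  · rintro hl_top ⟨L, -, hL, hLl, hvar⟩ t ht ht1
    refine (one_mul (px x)) ▸ hlim hl_top ht.le ht1 ?_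
    exact tendsto_div_floor_mul hL hLl hl_pos ht (φ := fun _ => 1)
      (fun u hu => (hvar u hu.1).comp tendsto_natCast_atTop_atTop) continuousWithinAt_const
  · rintro ⟨L, -, hL, hLl, hvar_lt, hvar_gt⟩
    have hl_top := tendsto_atTop_of_eventually_le_div_mul_two hLl hl_mono hl_pos one_lt_two
      ((hvar_gt 2 one_lt_two).eventually_ge_atTop 2)
    refine ⟨fun t ht0 ht1 => ?_, ?_⟩
    · refine (zero_mul (px x)) ▸ hlim hl_top ht0 ht1.le ?_
      rcases ht0.eq_or_lt with rfl | ht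
      · simpa using (tendsto_const_nhds (x := l 0)).div_atTop hl_top
      · exact tendsto_div_floor_mul hL hLl hl_pos ht (φ := fun _ => 0)
          (fun u hu => (hvar_lt u hu.1 (hu.2.trans_lt ht1)).comp tendsto_natCast_atTop_atTop)
          continuousWithinAt_const
    · refine (one_mul (px x)) ▸ hlim hl_top zero_le_one le_rfl ?_
      exact tendsto_const_nhds.congr fun n => by simp [div_self (hl_pos n).ne']

/-- **Asymptotic independence of `τ_n/n` and `ν_{τ_n}`.** With `p(x) = q^x (1-q)^{1-x}`:
(i) if `l_n` is regularly varying with index `c ∈ (0,∞)`, then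
`P(τ_n/n ≤ t, ν_{τ_n} = x) → t^c p(x)` for `t ∈ [0,1]`; (ii) if `l_n` is slowly varying
and `l_n → ∞`, the limit is `p(x)` for `t ∈ (0,1]`; (iii) in the fast increments case the
limit is `0` for `t ∈ [0,1)` and `p(x)` for `t = 1`. -/
theorem tau_nu_asymptotically_independent
    {Ω : Type*} [MeasurableSpace Ω] (ℙ : Measure Ω) [IsProbabilityMeasure ℙ]
    (l : ℕ → ℝ) (hl_pos : ∀ n, 0 < l n) (hl_mono : Monotone l)
    (qseq : ℕ → ℝ) (hq_mem : ∀ n, qseq n ∈ Icc (0:ℝ) 1)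
    (ε ν : ℕ → Ω → ℕ)
    (hε_le : ∀ n ω, ε n ω ≤ 1) (hν_le : ∀ n ω, ν n ω ≤ 1)
    (hε_meas : ∀ n, Measurable (ε n)) (hν_meas : ∀ n, Measurable (ν n))
    (hε_dist : ∀ n : ℕ, 1 ≤ n →
      ℙ {ω | ε n ω = 1} = ENNReal.ofReal (1 - l (n - 1) / l n))
    (hν_dist : ∀ n : ℕ, ℙ {ω | ν n ω = 1} = ENNReal.ofReal (qseq n))
    (hindep : ProbabilityTheory.iIndepFun
      (Sum.elim ε ν) ℙ)
    (q : ℝ) (hq_lim : Tendsto qseq atTop (nhds q))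
    (px : ℕ → ℝ) (hpx : ∀ x : ℕ, x ≤ 1 → px x = if x = 1 then q else 1 - q) :
    ∀ x : ℕ, x ≤ 1 →
      -- (i) regularly varying case, `0 < c < ∞`
      ((∀ c : ℝ, 0 < c →
        ∀ L : ℝ → ℝ, (∀ y : ℝ, 0 ≤ y → 0 ≤ L y) → StrictMonoOn L (Ici (0:ℝ)) →
          (∀ n : ℕ, L n = l n) →
          (∀ y : ℝ, 0 < y →
            Tendsto (fun t : ℝ => L (t * y) / L t) atTop (nhds (y ^ c))) →
          ∀ t : ℝ, t ∈ Icc (0:ℝ) 1 →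
            Tendsto (fun n : ℕ =>
                (ℙ {ω | (tauProc ε n ω : ℝ) / n ≤ t ∧ ν (tauProc ε n ω) ω = x}).toReal)
              atTop (nhds (t ^ c * px x))) ∧
      -- (ii) slowly varying case, `c = 0`, with `l_n → ∞`
      ((Tendsto l atTop atTop →
        (∃ L : ℝ → ℝ, (∀ y : ℝ, 0 ≤ y → 0 ≤ L y) ∧ MonotoneOn L (Ici (0:ℝ)) ∧
          (∀ n : ℕ, L n = l n) ∧
          (∀ y : ℝ, 0 < y → Tendsto (fun t : ℝ => L (t * y) / L t) atTop (nhds 1))) →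
        ∀ t : ℝ, 0 < t → t ≤ 1 →
          Tendsto (fun n : ℕ =>
              (ℙ {ω | (tauProc ε n ω : ℝ) / n ≤ t ∧ ν (tauProc ε n ω) ω = x}).toReal)
            atTop (nhds (px x)))) ∧
      -- (iii) fast increments case, `c = ∞`
      ((∃ L : ℝ → ℝ, (∀ y : ℝ, 0 ≤ y → 0 ≤ L y) ∧ MonotoneOn L (Ici (0:ℝ)) ∧
          (∀ n : ℕ, L n = l n) ∧
          (∀ y : ℝ, 0 < y → y < 1 →
            Tendsto (fun t : ℝ => L (t * y) / L t) atTop (nhds 0)) ∧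
          (∀ y : ℝ, 1 < y →
            Tendsto (fun t : ℝ => L (t * y) / L t) atTop atTop)) →
        (∀ t : ℝ, 0 ≤ t → t < 1 →
          Tendsto (fun n : ℕ =>
              (ℙ {ω | (tauProc ε n ω : ℝ) / n ≤ t ∧ ν (tauProc ε n ω) ω = x}).toReal)
            atTop (nhds 0)) ∧
        Tendsto (fun n : ℕ =>
            (ℙ {ω | (tauProc ε n ω : ℝ) / n ≤ 1 ∧ ν (tauProc ε n ω) ω = x}).toReal)
          atTop (nhds (px x)))) :=
  tau_nu_asymptotically_independent_general ℙ l hl_pos hl_mono qseq hq_mem ε ν hν_le hε_meas hν_meas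
    hε_dist hν_dist hindep q hq_lim px hpx
end

section
/- (Deterministic stratified fragmentation, fast increments case.) Suppose p_{n,k} = p_n for all 1 ≤ k ≤ n, where (p_n)_{n≥1} is a sequence in [0,1] with (1/n) Σ_{k=1}^n p_k → p̄ as n → ∞. Assume there exists a nondecreasing function L : [0,∞) → [0,∞) with L(n) = l_n for all n ∈ ℕ such that, as t → ∞, L(tx)/L(t) → 0 for every 0 < x < 1 and L(tx)/L(t) → ∞ for every x > 1 (c = ∞), and that q_n → q ∈ [0,1]. Then the empirical measures g_n converge weakly on [0,1] to the Dirac mass δ_{1−q} as n → ∞. -/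
/-! The break points interlace from one level to the next, so the points of level `n` with
index `k ∈ [n - m, m + 1]` stay in the level-`m` interval `[a_{m,0}, a_{m,m+1}]`. For
`m = ⌊x n⌋` with `x < 1` fast increments make `l_m / l_n → 0`, so this interval is
negligible at scale `l_n`, while `a_{m,0} - a_{n,0} = (1 - q)(l_n - l_m) + o(l_n)` because
each level `i` moves the left end by `(1 - q_i)(l_i - l_{i-1})`.
Hence all but `2(n - m) ≈ 2(1 - x) n` normalized break points are close to `1 - q`. -/

open MeasureTheory Filter Set
open scoped ENNReal

/-- The empirical measure `g_n = (1/n) Σ_{k=1}^n δ_{α_{n,k}}` of the normalized break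
points `α_{n,k} = (a_{n,k} - a_{n,0})/l_n`. -/
noncomputable def empiricalMeasure (α : ℕ → ℕ → ℝ) (n : ℕ) : Measure ℝ :=
  ((n : ℝ≥0∞))⁻¹ • ∑ k ∈ Finset.Icc 1 n, Measure.dirac (α n k)

open scoped Topology

theorem convex_comb_mem_Icc {t x y u v : ℝ} (ht : t ∈ Icc (0 : ℝ) 1) (hx : x ∈ Icc u v)
    (hy : y ∈ Icc u v) : t * x + (1 - t) * y ∈ Icc u v := by
  simpa only [smul_eq_mul] using
    convex_Icc u v hx hy ht.1 (sub_nonneg.2 ht.2) (add_sub_cancel t 1)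

section BreakPoints

variable {p : ℕ → ℕ → ℝ} {a : ℕ → ℕ → ℝ}

theorem breakPoint_succ_mem_Icc (hp : ∀ n k, p n k ∈ Icc (0 : ℝ) 1)
    (hrec : ∀ n k, k ≤ n →
      a (n + 1) (k + 1) = p (n + 1) (k + 1) * a n k + (1 - p (n + 1) (k + 1)) * a n (k + 1))
    {n k : ℕ} (hk : k ≤ n) (hle : a n k ≤ a n (k + 1)) :
    a (n + 1) (k + 1) ∈ Icc (a n k) (a n (k + 1)) := by
  rw [hrec n k hk]
  exact convex_comb_mem_Icc (hp _ _) (left_mem_Icc.2 hle) (right_mem_Icc.2 hle)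

theorem breakPoints_monotoneOn (hp : ∀ n k, p n k ∈ Icc (0 : ℝ) 1)
    (hrec : ∀ n k, k ≤ n →
      a (n + 1) (k + 1) = p (n + 1) (k + 1) * a n k + (1 - p (n + 1) (k + 1)) * a n (k + 1))
    (ha_anti : Antitone fun n => a n 0) (ha_mono : Monotone fun n => a n (n + 1))
    (ha_pos : a 0 0 ≤ a 0 1) (n : ℕ) : MonotoneOn (a n) (Iic (n + 1)) := by
  induction n with
  | zero =>
    refine monotoneOn_of_le_add_one ordConnected_Iic fun k _ _ hk => ?_
    obtain rfl : k = 0 := by simp only [mem_Iic] at hk; omega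
    exact ha_pos
  | succ n ih =>
    refine monotoneOn_of_le_add_one ordConnected_Iic fun k _ _ hk => ?_
    simp only [mem_Iic] at hk
    have hle : ∀ j ≤ n, a n j ≤ a n (j + 1) := fun j hj =>
      ih (by simp only [mem_Iic]; omega) (by simp only [mem_Iic]; omega) j.le_succ
    calc a (n + 1) k ≤ a n k := by
          cases k with
          | zero => exact ha_anti n.le_succ
          | succ j => exact (breakPoint_succ_mem_Icc hp hrec (by omega) (hle j (by omega))).2
      _ ≤ a (n + 1) (k + 1) := by
          rcases (show k ≤ n + 1 by omega).lt_or_eq with hk | rfl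
          · exact (breakPoint_succ_mem_Icc hp hrec (by omega) (hle k (by omega))).1
          · exact ha_mono n.le_succ

theorem breakPoint_mem_Icc_of_le (hp : ∀ n k, p n k ∈ Icc (0 : ℝ) 1)
    (hrec : ∀ n k, k ≤ n →
      a (n + 1) (k + 1) = p (n + 1) (k + 1) * a n k + (1 - p (n + 1) (k + 1)) * a n (k + 1))
    {m n k : ℕ} (hmono : MonotoneOn (a m) (Iic (m + 1))) (hmn : m ≤ n) (hk₁ : n - m ≤ k)
    (hk₂ : k ≤ m + 1) : a n k ∈ Icc (a m 0) (a m (m + 1)) := by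
  induction n, hmn using Nat.le_induction generalizing k with
  | base =>
    have hk : k ∈ Iic (m + 1) := hk₂
    exact ⟨hmono (by simp) hk k.zero_le, hmono hk (by simp) hk₂⟩
  | succ n hmn ih =>
    obtain ⟨j, rfl⟩ : ∃ j, k = j + 1 := ⟨k - 1, by omega⟩
    rw [hrec n j (by omega)]
    exact convex_comb_mem_Icc (hp _ _) (ih (by omega) (by omega)) (ih (by omega) (by omega))

end BreakPoints

theorem leftEndpoint_sub_succ_eq {a : ℕ → ℕ → ℝ} {l qseq : ℕ → ℝ}
    (ha_anti : Antitone fun n => a n 0) (ha_mono : Monotone fun n => a n (n + 1))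
    (hl : ∀ n, l n = a n (n + 1) - a n 0)
    (hq_def : ∀ n, l n < l (n + 1) →
      qseq (n + 1) = (a (n + 1) (n + 2) - a n (n + 1)) / (l (n + 1) - l n)) (j : ℕ) :
    a j 0 - a (j + 1) 0 = (1 - qseq (j + 1)) * (l (j + 1) - l j) := by
  have h₀ : a (j + 1) 0 ≤ a j 0 := ha_anti j.le_succ
  have h₁ : a j (j + 1) ≤ a (j + 1) (j + 2) := ha_mono j.le_succ
  rcases (show l j ≤ l (j + 1) by rw [hl, hl]; linarith).lt_or_eq with hlt | heq
  · rw [sub_mul, one_mul, hq_def j hlt, div_mul_cancel₀ _ (sub_ne_zero.2 hlt.ne'), hl, hl]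
    ring
  · rw [← heq, sub_self, mul_zero]
    rw [hl, hl] at heq
    linarith

theorem abs_sub_sub_mul_le_of_succ {f g : ℕ → ℝ} {c ε : ℝ} {m n : ℕ} (hmn : m ≤ n)
    (h : ∀ i, m ≤ i → i < n →
      |f (i + 1) - f i - c * (g (i + 1) - g i)| ≤ ε * (g (i + 1) - g i)) :
    |f n - f m - c * (g n - g m)| ≤ ε * (g n - g m) := by
  induction n, hmn using Nat.le_induction with
  | base => simp
  | succ n hmn ih =>
    calc |f (n + 1) - f m - c * (g (n + 1) - g m)|
        = |(f n - f m - c * (g n - g m)) + (f (n + 1) - f n - c * (g (n + 1) - g n))| := by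
          congr 1; ring
      _ ≤ ε * (g n - g m) + ε * (g (n + 1) - g n) :=
          (abs_add_le _ _).trans <|
            add_le_add (ih fun i hi hin => h i hi (by omega)) (h n hmn n.lt_succ_self)
      _ = ε * (g (n + 1) - g m) := by ring

theorem abs_normalized_breakPoint_sub_le {a : ℕ → ℕ → ℝ} {l qseq : ℕ → ℝ} {q ε y : ℝ} {m n : ℕ}
    (hl : ∀ n, l n = a n (n + 1) - a n 0) (hl_mono : Monotone l) (hl_pos : 0 < l n)
    (hstep : ∀ j, a j 0 - a (j + 1) 0 = (1 - qseq (j + 1)) * (l (j + 1) - l j))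
    (hq : q ∈ Icc (0 : ℝ) 1) (hε : ∀ i, m < i → |qseq i - q| ≤ ε) (hmn : m ≤ n)
    (hy : y ∈ Icc (a m 0) (a m (m + 1))) :
    |(y - a n 0) / l n - (1 - q)| ≤ ε + 2 * (l m / l n) := by
  have hlm : 0 ≤ l m := by rw [hl]; linarith [hy.1, hy.2]
  have hε₀ : 0 ≤ ε := (abs_nonneg _).trans (hε (m + 1) m.lt_succ_self)
  have hdrift : |a m 0 - a n 0 - (1 - q) * (l n - l m)| ≤ ε * (l n - l m) := by
    have := abs_sub_sub_mul_le_of_succ (f := fun i => -a i 0) (c := 1 - q) hmn fun i hi _ => by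
      have hΔ : 0 ≤ l (i + 1) - l i := sub_nonneg.2 (hl_mono i.le_succ)
      calc |-a (i + 1) 0 - -a i 0 - (1 - q) * (l (i + 1) - l i)|
          = |qseq (i + 1) - q| * (l (i + 1) - l i) := by
            rw [← abs_of_nonneg hΔ, ← abs_mul, abs_of_nonneg hΔ, ← abs_neg]
            congr 1; linarith [hstep i]
        _ ≤ ε * (l (i + 1) - l i) := mul_le_mul_of_nonneg_right (hε _ (by omega)) hΔ
    simpa only [neg_sub_neg] using this
  have hbound : |y - a n 0 - l n * (1 - q)| ≤ (ε + 2 * (l m / l n)) * l n := by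
    rw [add_mul, mul_assoc, div_mul_cancel₀ _ hl_pos.ne']
    rw [abs_le] at hdrift ⊢
    constructor <;>
      linarith [hy.1, hy.2, hl m, hdrift.1, hdrift.2, mul_nonneg hε₀ hlm, mul_nonneg hq.1 hlm,
        mul_nonneg (sub_nonneg.2 hq.2) hlm]
  rwa [div_sub' hl_pos.ne', abs_div, abs_of_pos hl_pos, div_le_iff₀ hl_pos]

theorem tendsto_floor_mul_ratio_zero {L : ℝ → ℝ} {l : ℕ → ℝ} (hL_mono : MonotoneOn L (Ici 0))
    (hL_interp : ∀ n : ℕ, L n = l n) (hl_pos : ∀ n, 0 < l n) {x : ℝ} (hx : 0 ≤ x)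
    (hfast : Tendsto (fun t => L (t * x) / L t) atTop (𝓝 0)) :
    Tendsto (fun n : ℕ => l ⌊n * x⌋₊ / l n) atTop (𝓝 0) := by
  refine squeeze_zero (fun n => div_nonneg (hl_pos _).le (hl_pos n).le) (fun n => ?_)
    (hfast.comp tendsto_natCast_atTop_atTop)
  have hnx : (0 : ℝ) ≤ n * x := by positivity
  rw [Function.comp_apply, ← hL_interp, ← hL_interp]
  exact div_le_div_of_nonneg_right (hL_mono (by simp) hnx (Nat.floor_le hnx))
    (hL_interp n ▸ hl_pos n).le

theorem card_filter_not_window_le (m n : ℕ) :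
    ((Finset.Icc 1 n).filter fun k => ¬(n - m ≤ k ∧ k ≤ m + 1)).card ≤ 2 * (n - m) := by
  have hsub : ((Finset.Icc 1 n).filter fun k => ¬(n - m ≤ k ∧ k ≤ m + 1)) ⊆
      Finset.Ico 1 (n - m) ∪ Finset.Icc (m + 2) n := by
    intro k hk
    simp only [Finset.mem_filter, Finset.mem_Icc] at hk
    simp only [Finset.mem_union, Finset.mem_Ico, Finset.mem_Icc]
    omega
  have := (Finset.card_le_card hsub).trans (Finset.card_union_le _ _)
  rw [Nat.card_Ico, Nat.card_Icc] at this
  omega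

theorem floor_mul_le_self {x : ℝ} (hx : x ≤ 1) (n : ℕ) : ⌊n * x⌋₊ ≤ n :=
  Nat.floor_le_of_le (mul_le_of_le_one_right n.cast_nonneg hx)

theorem tendsto_div_zero_of_le_sub_floor {b : ℕ → ℕ}
    (h : ∀ x ∈ Ioo (0 : ℝ) 1, ∀ᶠ n : ℕ in atTop, b n ≤ 2 * (n - ⌊n * x⌋₊)) :
    Tendsto (fun n => (b n : ℝ) / n) atTop (𝓝 0) := by
  refine tendsto_order.2 ⟨fun η hη => .of_forall fun n => hη.trans_le (by positivity),
    fun η hη => ?_⟩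
  set x := max (1 / 2) (1 - η / 4)
  have hx : x ∈ Ioo (0 : ℝ) 1 := ⟨by positivity, max_lt (by norm_num) (by linarith)⟩
  filter_upwards [h x hx, eventually_gt_atTop 0,
    (tendsto_const_div_atTop_nhds_zero_nat 2).eventually (gt_mem_nhds (half_pos hη))]
    with n hb hn hsmall
  have hb' : (b n : ℝ) ≤ 2 * (n - (n * x - 1)) := by
    have : (b n : ℝ) ≤ 2 * (n - ⌊n * x⌋₊) := by
      rw [← Nat.cast_sub (floor_mul_le_self hx.2.le n)]
      exact_mod_cast hb
    linarith [Nat.sub_one_lt_floor (n * x)]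
  have hn' : (0 : ℝ) < n := by exact_mod_cast hn
  rw [div_lt_iff₀ hn']
  rw [div_lt_iff₀ hn'] at hsmall
  linarith [mul_nonneg n.cast_nonneg (sub_nonneg.2 (le_max_right (1 / 2 : ℝ) (1 - η / 4)))]

theorem integral_empiricalMeasure (α : ℕ → ℕ → ℝ) (n : ℕ) (f : ℝ → ℝ) :
    ∫ x, f x ∂(empiricalMeasure α n) = (n : ℝ)⁻¹ * ∑ k ∈ Finset.Icc 1 n, f (α n k) := by
  rw [empiricalMeasure, integral_smul_measure,
    integral_finsetSum_measure fun k _ => integrable_dirac enorm_lt_top]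
  simp [integral_dirac, ENNReal.toReal_inv]

theorem abs_average_sub_le {ι : Type*} {s : Finset ι} {g : ι → ℝ} {c ε B : ℝ} (hε : 0 ≤ ε)
    (P : ι → Prop) [DecidablePred P] (hgood : ∀ k ∈ s, ¬P k → |g k - c| ≤ ε)
    (hbad : ∀ k ∈ s, |g k - c| ≤ B) (hs : s.Nonempty) :
    |(s.card : ℝ)⁻¹ * ∑ k ∈ s, g k - c| ≤ ε + B * (s.filter P).card / s.card := by
  have hcard : (0 : ℝ) < s.card := by exact_mod_cast hs.card_pos
  have hsum : ∑ k ∈ s, |g k - c| ≤ ∑ k ∈ s, (ε + if P k then B else 0) :=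
    Finset.sum_le_sum fun k hk => by
      split_ifs with hP
      · linarith [hbad k hk]
      · simpa using hgood k hk hP
  rw [Finset.sum_add_distrib, ← Finset.sum_filter, Finset.sum_const, Finset.sum_const,
    nsmul_eq_mul, nsmul_eq_mul] at hsum
  have hcentre : (s.card : ℝ)⁻¹ * ∑ k ∈ s, g k - c = (s.card : ℝ)⁻¹ * ∑ k ∈ s, (g k - c) := by
    rw [Finset.sum_sub_distrib, Finset.sum_const, nsmul_eq_mul]
    field_simp
  calc |(s.card : ℝ)⁻¹ * ∑ k ∈ s, g k - c| = (s.card : ℝ)⁻¹ * |∑ k ∈ s, (g k - c)| := by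
        rw [hcentre, abs_mul, abs_of_pos (inv_pos.2 hcard)]
    _ ≤ (s.card : ℝ)⁻¹ * (s.card * ε + (s.filter P).card * B) :=
        mul_le_mul_of_nonneg_left ((Finset.abs_sum_le_sum_abs _ _).trans hsum) (by positivity)
    _ = ε + B * (s.filter P).card / s.card := by field_simp

theorem tendsto_integral_empiricalMeasure_dirac {α : ℕ → ℕ → ℝ} {x : ℝ}
    (hconc : ∀ δ > 0, Tendsto
      (fun n : ℕ => (((Finset.Icc 1 n).filter fun k => δ ≤ |α n k - x|).card : ℝ) / n)
      atTop (𝓝 0))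
    (f : BoundedContinuousFunction ℝ ℝ) :
    Tendsto (fun n => ∫ y, f y ∂(empiricalMeasure α n)) atTop
      (𝓝 (∫ y, f y ∂(Measure.dirac x))) := by
  simp only [integral_empiricalMeasure, integral_dirac]
  rw [Metric.tendsto_atTop]
  intro ε hε
  obtain ⟨δ, hδ, hf⟩ := Metric.continuousAt_iff.1 f.continuous.continuousAt (ε / 2) (half_pos hε)
  obtain ⟨N, hN⟩ := eventually_atTop.1 <| ((hconc δ hδ).eventually
    (gt_mem_nhds (show 0 < ε / (4 * (‖f‖ + 1)) by positivity))).and (eventually_ge_atTop 1)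
  refine ⟨N, fun n hn => ?_⟩
  obtain ⟨hfar, hn₁⟩ := hN n hn
  have hcard : ((Finset.Icc 1 n).card : ℝ) = n := by simp
  have havg := abs_average_sub_le (s := Finset.Icc 1 n) (g := fun k => f (α n k)) (c := f x)
    (half_pos hε).le (fun k => δ ≤ |α n k - x|)
    (fun k _ hk => (hf (by rwa [Real.dist_eq, ← not_le])).le)
    (fun k _ => f.dist_le_two_norm _ _) ⟨1, by simpa using hn₁⟩
  rw [hcard, mul_div_assoc] at havg
  rw [Real.dist_eq]
  calc _ ≤ ε / 2 + 2 * ‖f‖ * (ε / (4 * (‖f‖ + 1))) :=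
        havg.trans (by gcongr)
    _ < ε := by
        rw [← sub_pos]
        field_simp
        nlinarith [norm_nonneg f]

theorem deterministic_stratified_fast_increments_general
    (p : ℕ → ℝ) (hp : ∀ n, p n ∈ Icc (0:ℝ) 1)
    (a : ℕ → ℕ → ℝ)
    (ha_anti : Antitone fun n => a n 0)
    (ha_mono : Monotone fun n => a n (n + 1))
    (ha_pos : a 0 0 < a 0 1)
    (harec : ∀ n : ℕ, 1 ≤ n → ∀ k : ℕ, 1 ≤ k → k ≤ n →
      a n k = p n * a (n - 1) (k - 1) + (1 - p n) * a (n - 1) k)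
    (l : ℕ → ℝ) (hl : ∀ n, l n = a n (n + 1) - a n 0)
    (qseq : ℕ → ℝ) (hq_mem : ∀ n, qseq n ∈ Icc (0:ℝ) 1)
    (hq_def : ∀ n : ℕ, 1 ≤ n → l (n - 1) < l n →
      qseq n = (a n (n + 1) - a (n - 1) n) / (l n - l (n - 1)))
    (L : ℝ → ℝ)
    (hL_mono : MonotoneOn L (Ici (0:ℝ)))
    (hL_interp : ∀ n : ℕ, L n = l n)
    (hL_fast_lt : ∀ x : ℝ, 0 < x → x < 1 →
      Tendsto (fun t : ℝ => L (t * x) / L t) atTop (nhds 0))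
    (q : ℝ) (hq_lim : Tendsto qseq atTop (nhds q))
    (α : ℕ → ℕ → ℝ) (hα : ∀ n k, α n k = (a n k - a n 0) / l n) :
    ∀ f : BoundedContinuousFunction ℝ ℝ,
      Tendsto (fun n : ℕ => ∫ x, f x ∂(empiricalMeasure α n)) atTop
        (nhds (∫ x, f x ∂(Measure.dirac (1 - q)))) := by
  have hrec : ∀ n k, k ≤ n →
      a (n + 1) (k + 1) = p (n + 1) * a n k + (1 - p (n + 1)) * a n (k + 1) :=
    fun n k hk => by simpa using harec (n + 1) (by omega) (k + 1) (by omega) (by omega)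
  have hmono := breakPoints_monotoneOn (fun n _ => hp n) hrec ha_anti ha_mono ha_pos.le
  have hl_mono : Monotone l := fun m n h => by rw [hl, hl]; linarith [ha_mono h, ha_anti h]
  have hl_pos : ∀ n, 0 < l n := fun n =>
    (hl_mono n.zero_le).trans_lt' (by rw [hl]; simpa using ha_pos)
  have hstep := leftEndpoint_sub_succ_eq ha_anti ha_mono hl fun n h => by
    simpa using hq_def (n + 1) (by omega) (by simpa using h)
  have hq : q ∈ Icc (0 : ℝ) 1 := isClosed_Icc.mem_of_tendsto hq_lim (.of_forall hq_mem)
  refine tendsto_integral_empiricalMeasure_dirac fun δ hδ =>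
    tendsto_div_zero_of_le_sub_floor fun x hx => ?_
  obtain ⟨N, hN⟩ :=
    eventually_atTop.1 (hq_lim.eventually (Metric.closedBall_mem_nhds q (half_pos hδ)))
  have hm_large : ∀ᶠ n : ℕ in atTop, N ≤ ⌊n * x⌋₊ := (tendsto_nat_floor_atTop.comp
    (tendsto_natCast_atTop_atTop.atTop_mul_const hx.1)).eventually_ge_atTop N
  filter_upwards [hm_large, (tendsto_floor_mul_ratio_zero hL_mono hL_interp hl_pos hx.1.le
    (hL_fast_lt x hx.1 hx.2)).eventually (gt_mem_nhds (by positivity : 0 < δ / 4))]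
    with n hNm hratio
  have hmn := floor_mul_le_self hx.2.le n
  refine (Finset.card_le_card (Finset.monotone_filter_right _ fun k _ hfar hwin =>
    hfar.not_gt ?_)).trans (card_filter_not_window_le _ _)
  rw [hα]
  calc _ ≤ δ / 2 + 2 * (l ⌊n * x⌋₊ / l n) :=
        abs_normalized_breakPoint_sub_le hl hl_mono (hl_pos n) hstep hq
          (fun i hi => by simpa [Real.dist_eq] using hN i (by omega)) hmn
          (breakPoint_mem_Icc_of_le (fun n _ => hp n) hrec (hmono _) hmn hwin.1 hwin.2)
    _ < δ := by linarith

/-- **Deterministic stratified fragmentation, fast increments case (`c = ∞`).**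
If `p_{n,k} = p_n` with Cesàro mean `p̄`, the interval lengths `l_n` have fast increments,
and `q_n → q`, then the empirical measures of the normalized break points converge weakly
to the Dirac mass `δ_{1-q}`. -/
theorem deterministic_stratified_fast_increments
    (p : ℕ → ℝ) (hp : ∀ n, p n ∈ Icc (0:ℝ) 1)
    (a : ℕ → ℕ → ℝ)
    (ha_anti : Antitone fun n => a n 0)
    (ha_mono : Monotone fun n => a n (n + 1))
    (ha_pos : a 0 0 < a 0 1)
    (harec : ∀ n : ℕ, 1 ≤ n → ∀ k : ℕ, 1 ≤ k → k ≤ n →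
      a n k = p n * a (n - 1) (k - 1) + (1 - p n) * a (n - 1) k)
    (l : ℕ → ℝ) (hl : ∀ n, l n = a n (n + 1) - a n 0)
    (qseq : ℕ → ℝ) (hq_mem : ∀ n, qseq n ∈ Icc (0:ℝ) 1)
    (hq_def : ∀ n : ℕ, 1 ≤ n → l (n - 1) < l n →
      qseq n = (a n (n + 1) - a (n - 1) n) / (l n - l (n - 1)))
    (pbar : ℝ)
    (hcesaro : Tendsto (fun n : ℕ => (∑ k ∈ Finset.Icc 1 n, p k) / n) atTop (nhds pbar))
    (L : ℝ → ℝ) (hL_nonneg : ∀ x : ℝ, 0 ≤ x → 0 ≤ L x)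
    (hL_mono : MonotoneOn L (Ici (0:ℝ)))
    (hL_interp : ∀ n : ℕ, L n = l n)
    (hL_fast_lt : ∀ x : ℝ, 0 < x → x < 1 →
      Tendsto (fun t : ℝ => L (t * x) / L t) atTop (nhds 0))
    (hL_fast_gt : ∀ x : ℝ, 1 < x →
      Tendsto (fun t : ℝ => L (t * x) / L t) atTop atTop)
    (q : ℝ) (hq_lim : Tendsto qseq atTop (nhds q))
    (α : ℕ → ℕ → ℝ) (hα : ∀ n k, α n k = (a n k - a n 0) / l n) :
    ∀ f : BoundedContinuousFunction ℝ ℝ,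
      Tendsto (fun n : ℕ => ∫ x, f x ∂(empiricalMeasure α n)) atTop
        (nhds (∫ x, f x ∂(Measure.dirac (1 - q)))) :=
  deterministic_stratified_fast_increments_general p hp a ha_anti ha_mono ha_pos harec l hl qseq
    hq_mem hq_def L hL_mono hL_interp hL_fast_lt q hq_lim α hα
end
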